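/- Let $X$ be a Banach space and $f : [a,b] \to X$ differentiable with $\|f'(t)\| \le M$ for $t \in [a,b]$. Then $\left\| \int_a^b f(t)\,dt - (b-a)\left[\frac{f(a)+f(b)}{4} + \frac{1}{2}f\left(\frac{a+b}{2}\right)\right] \right\| \le \frac{1}{8}(b-a)^2 M$. -/
import Mathlib


open MeasureTheory intervalIntegral

lemma aux16L {X : Type*} [NormedAddCommGroup X] [NormedSpace ℝ X] {g : ℝ → X}
    {c d M : ℝ} (hcd : c ≤ d) (hg : IntervalIntegrable g MeasureTheory.volume c d)
    (hb : ∀ t ∈ Set.Icc c d, ‖g t‖ ≤ M * (t - c)) :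
    ‖∫ t in c..d, g t‖ ≤ M * (d - c) ^ 2 / 2 := by
  have hlin : IntervalIntegrable (fun t => M * (t - c)) MeasureTheory.volume c d :=
    (by fun_prop : Continuous fun t => M * (t - c)).intervalIntegrable c d
  calc ‖∫ t in c..d, g t‖ ≤ ∫ t in c..d, ‖g t‖ :=
        intervalIntegral.norm_integral_le_integral_norm hcd
    _ ≤ ∫ t in c..d, M * (t - c) :=
        intervalIntegral.integral_mono_on hcd hg.norm hlin (fun t ht => hb t ht)
    _ = M * (d - c) ^ 2 / 2 := by
        rw [intervalIntegral.integral_const_mul,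
          intervalIntegral.integral_sub intervalIntegrable_id intervalIntegrable_const,
          integral_id, intervalIntegral.integral_const, smul_eq_mul]
        ring

lemma aux16R {X : Type*} [NormedAddCommGroup X] [NormedSpace ℝ X] {g : ℝ → X}
    {c d M : ℝ} (hcd : c ≤ d) (hg : IntervalIntegrable g MeasureTheory.volume c d)
    (hb : ∀ t ∈ Set.Icc c d, ‖g t‖ ≤ M * (d - t)) :
    ‖∫ t in c..d, g t‖ ≤ M * (d - c) ^ 2 / 2 := by
  have hlin : IntervalIntegrable (fun t => M * (d - t)) MeasureTheory.volume c d :=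
    (by fun_prop : Continuous fun t => M * (d - t)).intervalIntegrable c d
  calc ‖∫ t in c..d, g t‖ ≤ ∫ t in c..d, ‖g t‖ :=
        intervalIntegral.norm_integral_le_integral_norm hcd
    _ ≤ ∫ t in c..d, M * (d - t) :=
        intervalIntegral.integral_mono_on hcd hg.norm hlin (fun t ht => hb t ht)
    _ = M * (d - c) ^ 2 / 2 := by
        rw [intervalIntegral.integral_const_mul,
          intervalIntegral.integral_sub intervalIntegrable_const intervalIntegrable_id,
          integral_id, intervalIntegral.integral_const, smul_eq_mul]
        ring

theorem stmt16 {X : Type*} [NormedAddCommGroup X] [NormedSpace ℝ X] [CompleteSpace X]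
    {a b : ℝ} (hab : a < b) {f f' : ℝ → X}
    (hderiv : ∀ t ∈ Set.Icc a b, HasDerivAt f (f' t) t)
    {M : ℝ} (hM : ∀ t ∈ Set.Icc a b, ‖f' t‖ ≤ M) :
    ‖(∫ t in a..b, f t) - (b - a) • ((4 : ℝ)⁻¹ • (f a + f b) + (2 : ℝ)⁻¹ • f ((a + b) / 2))‖ ≤
      (1 / 8) * (b - a) ^ 2 * M := by
  have hab' : a ≤ b := hab.le
  set m : ℝ := (a + b) / 2 with hm
  set q1 : ℝ := (3 * a + b) / 4 with hq1
  set q3 : ℝ := (a + 3 * b) / 4 with hq3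
  have hma : a ∈ Set.Icc a b := ⟨le_refl a, hab'⟩
  have hmb : b ∈ Set.Icc a b := ⟨hab', le_refl b⟩
  have hmm : m ∈ Set.Icc a b := ⟨by rw [hm]; linarith, by rw [hm]; linarith⟩
  have hmq1 : q1 ∈ Set.Icc a b := ⟨by rw [hq1]; linarith, by rw [hq1]; linarith⟩
  have hmq3 : q3 ∈ Set.Icc a b := ⟨by rw [hq3]; linarith, by rw [hq3]; linarith⟩
  -- Lipschitz-type key estimate
  have key : ∀ s ∈ Set.Icc a b, ∀ t ∈ Set.Icc a b, ‖f t - f s‖ ≤ M * |t - s| := by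
    intro s hs t ht
    have := (convex_Icc a b).norm_image_sub_le_of_norm_hasDerivWithin_le
      (fun x hx => (hderiv x hx).hasDerivWithinAt) hM hs ht
    simpa [Real.norm_eq_abs] using this
  have hfc : ContinuousOn f (Set.Icc a b) := fun t ht =>
    (hderiv t ht).continuousAt.continuousWithinAt
  have hi : ∀ c ∈ Set.Icc a b, ∀ d ∈ Set.Icc a b, IntervalIntegrable f MeasureTheory.volume c d := by
    intro c hc d hd
    exact (hfc.mono (Set.uIcc_subset_Icc hc hd)).intervalIntegrable
  -- split the integral
  have h1 : (∫ t in a..q1, f t) + (∫ t in q1..m, f t) = ∫ t in a..m, f t :=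
    integral_add_adjacent_intervals (hi a hma q1 hmq1) (hi q1 hmq1 m hmm)
  have h2 : (∫ t in a..m, f t) + (∫ t in m..q3, f t) = ∫ t in a..q3, f t :=
    integral_add_adjacent_intervals (hi a hma m hmm) (hi m hmm q3 hmq3)
  have h3 : (∫ t in a..q3, f t) + (∫ t in q3..b, f t) = ∫ t in a..b, f t :=
    integral_add_adjacent_intervals (hi a hma q3 hmq3) (hi q3 hmq3 b hmb)
  have hsplit : (∫ t in a..b, f t)
      = (∫ t in a..q1, f t) + (∫ t in q1..m, f t) + (∫ t in m..q3, f t) + (∫ t in q3..b, f t) := by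
    rw [h1, h2, h3]
  have hsub : ∀ c ∈ Set.Icc a b, ∀ d ∈ Set.Icc a b, ∀ p : X,
      (∫ t in c..d, (f t - p)) = (∫ t in c..d, f t) - (d - c) • p := by
    intro c hc d hd p
    rw [intervalIntegral.integral_sub (hi c hc d hd) intervalIntegrable_const,
      intervalIntegral.integral_const]
  have hE : (∫ t in a..b, f t) - (b - a) • ((4 : ℝ)⁻¹ • (f a + f b) + (2 : ℝ)⁻¹ • f m)
      = (∫ t in a..q1, (f t - f a)) + (∫ t in q1..m, (f t - f m))
        + (∫ t in m..q3, (f t - f m)) + (∫ t in q3..b, (f t - f b)) := by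
    rw [hsub a hma q1 hmq1 (f a), hsub q1 hmq1 m hmm (f m), hsub m hmm q3 hmq3 (f m),
      hsub q3 hmq3 b hmb (f b), hsplit, hm, hq1, hq3]
    module
  have haux : ∀ c ∈ Set.Icc a b, ∀ d ∈ Set.Icc a b, ∀ p ∈ Set.Icc a b,
      IntervalIntegrable (fun t => f t - f p) MeasureTheory.volume c d := by
    intro c hc d hd p hp
    exact (hi c hc d hd).sub intervalIntegrable_const
  -- bounds on each piece
  have hA : ‖∫ t in a..q1, (f t - f a)‖ ≤ M * (q1 - a) ^ 2 / 2 := by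
    apply aux16L hmq1.1 (haux a hma q1 hmq1 a hma)
    intro t ht
    have ht' : t ∈ Set.Icc a b := ⟨ht.1, le_trans ht.2 hmq1.2⟩
    have := key a hma t ht'
    rwa [abs_of_nonneg (by linarith [ht.1])] at this
  have hB : ‖∫ t in q1..m, (f t - f m)‖ ≤ M * (m - q1) ^ 2 / 2 := by
    have hq1m : q1 ≤ m := by rw [hq1, hm]; linarith
    apply aux16R hq1m (haux q1 hmq1 m hmm m hmm)
    intro t ht
    have ht' : t ∈ Set.Icc a b := ⟨le_trans hmq1.1 ht.1, le_trans ht.2 hmm.2⟩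
    have := key m hmm t ht'
    rwa [abs_of_nonpos (by linarith [ht.2]), neg_sub] at this
  have hC : ‖∫ t in m..q3, (f t - f m)‖ ≤ M * (q3 - m) ^ 2 / 2 := by
    have hmq3' : m ≤ q3 := by rw [hq3, hm]; linarith
    apply aux16L hmq3' (haux m hmm q3 hmq3 m hmm)
    intro t ht
    have ht' : t ∈ Set.Icc a b := ⟨le_trans hmm.1 ht.1, le_trans ht.2 hmq3.2⟩
    have := key m hmm t ht'
    rwa [abs_of_nonneg (by linarith [ht.1])] at this
  have hD : ‖∫ t in q3..b, (f t - f b)‖ ≤ M * (b - q3) ^ 2 / 2 := by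
    apply aux16R hmq3.2 (haux q3 hmq3 b hmb b hmb)
    intro t ht
    have ht' : t ∈ Set.Icc a b := ⟨le_trans hmq3.1 ht.1, ht.2⟩
    have := key b hmb t ht'
    rwa [abs_of_nonpos (by linarith [ht.2]), neg_sub] at this
  rw [hE]
  have hnorm : ‖(∫ t in a..q1, (f t - f a)) + (∫ t in q1..m, (f t - f m))
        + (∫ t in m..q3, (f t - f m)) + (∫ t in q3..b, (f t - f b))‖
      ≤ ‖∫ t in a..q1, (f t - f a)‖ + ‖∫ t in q1..m, (f t - f m)‖
        + ‖∫ t in m..q3, (f t - f m)‖ + ‖∫ t in q3..b, (f t - f b)‖ := by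
    calc _ ≤ ‖(∫ t in a..q1, (f t - f a)) + (∫ t in q1..m, (f t - f m))
        + (∫ t in m..q3, (f t - f m))‖ + ‖∫ t in q3..b, (f t - f b)‖ := norm_add_le _ _
      _ ≤ _ := by
        gcongr
        calc _ ≤ ‖(∫ t in a..q1, (f t - f a)) + (∫ t in q1..m, (f t - f m))‖
            + ‖∫ t in m..q3, (f t - f m)‖ := norm_add_le _ _
          _ ≤ _ := by gcongr; exact norm_add_le _ _
  have e1 : q1 - a = (b - a) / 4 := by rw [hq1]; ring
  have e2 : m - q1 = (b - a) / 4 := by rw [hq1, hm]; ring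
  have e3 : q3 - m = (b - a) / 4 := by rw [hq3, hm]; ring
  have e4 : b - q3 = (b - a) / 4 := by rw [hq3]; ring
  rw [e1] at hA; rw [e2] at hB; rw [e3] at hC; rw [e4] at hD
  have : M * ((b - a) / 4) ^ 2 / 2 = (1 / 32) * (b - a) ^ 2 * M := by ring
  rw [this] at hA hB hC hD
  linarith
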